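/- arXiv:2407.15530 — 2 statements merged into one kernel-verified Lean document; each statement's English description precedes it below -/
import Mathlib

section
/- Under the stated assumptions, the variance of the self-ambiguity part satisfies Var(χ_s(τ,ν)) = L·(μ₄ − 1)·|ψ(τ,ν)|². -/
open MeasureTheory ProbabilityTheory Complex

/-!
With `a_n := |s_n|²` and `c_n := ψ_{n,n}(τ,ν)`, the self-ambiguity part `χ_s = Σ a_n c_n` is a
complex combination of pairwise independent real random variables. The variance of a complex
variable is the sum of the variances of its real and imaginary parts, each of which is a real
combination of the `a_n`, so `Var χ_s = Σ |c_n|² Var a_n`. The phase factor of `c_n` has modulus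
one, so `|c_n| = |ψ(τ,ν)|`, and `Var a_n = E|s_n|⁴ − (E|s_n|²)² = μ₄ − 1`.
-/

/-- The cross-ambiguity function between the `n`-th and `m`-th time-shifted pulses:
`ψ_{n,m}(τ,ν) = exp(−2πi·n·ν·T) · ψ(τ + (m−n)·T, ν)`. -/
noncomputable def psiNM (ψ : ℝ × ℝ → ℂ) (T τ ν : ℝ) (n m : ℕ) : ℂ :=
  Complex.exp (-2 * Real.pi * Complex.I * n * ν * T) * ψ (τ + ((m : ℝ) - n) * T, ν)

/-- The self-ambiguity part `χ_s(τ,ν) = Σ_n |s_n|² ψ_{n,n}(τ,ν)`. -/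
noncomputable def chiS {Ω : Type*} (L : ℕ) (ψ : ℝ × ℝ → ℂ) (T τ ν : ℝ)
    (s : Fin L → Ω → ℂ) (ω : Ω) : ℂ :=
  ∑ n : Fin L, (Complex.ofReal (‖s n ω‖)) ^ 2 * psiNM ψ T τ ν n n

/-- The variance `Var(X) = E[|X|²] − |E[X]|²` of a complex random variable. -/
noncomputable def cVar {Ω : Type*} [MeasureSpace Ω] (X : Ω → ℂ) : ℝ :=
  (∫ ω, (‖X ω‖) ^ 2) - (‖∫ ω, X ω‖) ^ 2

lemma variance_sum_mul_of_pairwise_indepFun {Ω ι : Type*} [MeasurableSpace Ω] {μ : Measure Ω}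
    (s : Finset ι) {a : ι → Ω → ℝ} (r : ι → ℝ) (ha : ∀ i ∈ s, MemLp (a i) 2 μ)
    (hindep : Set.Pairwise ↑s fun i j => IndepFun (a i) (a j) μ) :
    Var[fun ω => ∑ i ∈ s, r i * a i ω; μ] = ∑ i ∈ s, r i ^ 2 * Var[a i; μ] := by
  simpa only [Finset.sum_fn, variance_const_mul] using
    IndepFun.variance_sum (X := fun i ω => r i * a i ω) (μ := μ)
      (fun i hi => (ha i hi).const_mul (r i))
      (fun i hi j hj hij => (hindep hi hj hij).comp (measurable_const_mul (r i))
        (measurable_const_mul (r j)))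

lemma memLp_two_sq_norm {Ω E : Type*} [MeasurableSpace Ω] {μ : Measure Ω} [NormedAddCommGroup E]
    {X : Ω → E} (hX : AEStronglyMeasurable X μ) (h4 : Integrable (fun ω => ‖X ω‖ ^ 4) μ) :
    MemLp (fun ω => ‖X ω‖ ^ 2) 2 μ := by
  refine (memLp_two_iff_integrable_sq (hX.norm.pow 2)).2 ?_
  simpa only [Pi.pow_apply, ← pow_mul] using h4

section Variance

variable {Ω : Type*} [MeasureSpace Ω] [IsProbabilityMeasure (ℙ : Measure Ω)]

lemma cVar_eq_variance_re_add_variance_im {X : Ω → ℂ} (hX : MemLp X 2) :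
    cVar X = Var[fun ω => (X ω).re] + Var[fun ω => (X ω).im] := by
  have hre : MemLp (fun ω => (X ω).re) 2 := hX.re
  have him : MemLp (fun ω => (X ω).im) 2 := hX.im
  have hX1 : Integrable X := hX.integrable one_le_two
  have hint_re : ∫ ω, (X ω).re = (∫ ω, X ω).re := integral_re hX1
  have hint_im : ∫ ω, (X ω).im = (∫ ω, X ω).im := integral_im hX1
  rw [cVar, variance_eq_sub hre, variance_eq_sub him, hint_re, hint_im]
  simp only [Complex.sq_norm, Complex.normSq_apply, Pi.pow_apply]
  rw [integral_add (by simpa [sq] using hre.integrable_sq) (by simpa [sq] using him.integrable_sq)]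
  simp only [sq]
  ring

lemma cVar_sum_ofReal_mul {ι : Type*} [Fintype ι] {a : ι → Ω → ℝ} (c : ι → ℂ)
    (ha : ∀ i, MemLp (a i) 2) (hindep : Pairwise fun i j => IndepFun (a i) (a j)) :
    cVar (fun ω => ∑ i, (a i ω : ℂ) * c i) = ∑ i, ‖c i‖ ^ 2 * Var[a i] := by
  have hmem : MemLp (fun ω => ∑ i, (a i ω : ℂ) * c i) 2 :=
    memLp_finsetSum _ fun i _ => (ha i).ofReal.mul_const (c i)
  have hind := hindep.set_pairwise (Finset.univ : Finset ι)
  rw [cVar_eq_variance_re_add_variance_im hmem]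
  simp only [Complex.re_sum, Complex.im_sum, Complex.re_ofReal_mul, Complex.im_ofReal_mul]
  simp only [mul_comm _ (c _).re, mul_comm _ (c _).im]
  rw [variance_sum_mul_of_pairwise_indepFun _ _ (fun i _ => ha i) hind,
    variance_sum_mul_of_pairwise_indepFun _ _ (fun i _ => ha i) hind, ← Finset.sum_add_distrib]
  simp only [Complex.sq_norm, Complex.normSq_apply]
  exact Finset.sum_congr rfl fun i _ => by ring

end Variance

lemma norm_psiNM_self (ψ : ℝ × ℝ → ℂ) (T τ ν : ℝ) (n : ℕ) :
    ‖psiNM ψ T τ ν n n‖ = ‖ψ (τ, ν)‖ := by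
  simp [psiNM, Complex.norm_exp]

lemma chiS_eq_sum {Ω : Type*} (L : ℕ) (ψ : ℝ × ℝ → ℂ) (T τ ν : ℝ) (s : Fin L → Ω → ℂ) :
    chiS L ψ T τ ν s = fun ω => ∑ n, ((‖s n ω‖ ^ 2 : ℝ) : ℂ) * psiNM ψ T τ ν n n := by
  ext ω
  simp [chiS]

theorem variance_self_ambiguity_general
    {Ω : Type*} [MeasureSpace Ω] [IsProbabilityMeasure (ℙ : Measure Ω)]
    (L : ℕ) (T : ℝ) (τ ν : ℝ)
    (ψ : ℝ × ℝ → ℂ) (s : Fin L → Ω → ℂ) (μ₄ : ℝ)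
    (hmeas : ∀ n : Fin L, Measurable (s n))
    (hindep : iIndepFun s ℙ)
    (hE2 : ∀ n : Fin L, ∫ ω, (‖s n ω‖) ^ 2 ∂ℙ = 1)
    (hmom4 : ∀ n : Fin L, Integrable (fun ω => (‖s n ω‖) ^ 4) ℙ)
    (hE4 : ∀ n : Fin L, ∫ ω, (‖s n ω‖) ^ 4 ∂ℙ = μ₄) :
    cVar (chiS L ψ T τ ν s) = L * (μ₄ - 1) * (‖ψ (τ, ν)‖) ^ 2 := by
  have hmemLp : ∀ n, MemLp (fun ω => ‖s n ω‖ ^ 2) 2 :=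
    fun n => memLp_two_sq_norm (hmeas n).aestronglyMeasurable (hmom4 n)
  have hindep_sq : Pairwise fun n m =>
      IndepFun (fun ω => ‖s n ω‖ ^ 2) (fun ω => ‖s m ω‖ ^ 2) :=
    fun n m hnm => (hindep.indepFun hnm).comp (measurable_norm.pow_const 2)
      (measurable_norm.pow_const 2)
  have hvar : ∀ n, Var[fun ω => ‖s n ω‖ ^ 2] = μ₄ - 1 := by
    intro n
    rw [variance_eq_sub (hmemLp n)]
    simp only [Pi.pow_apply, ← pow_mul, hE2, hE4]
    norm_num
  rw [chiS_eq_sum, cVar_sum_ofReal_mul _ hmemLp hindep_sq]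
  simp only [norm_psiNM_self, hvar, Finset.sum_const, Finset.card_univ, Fintype.card_fin,
    nsmul_eq_mul]
  ring

/-- The variance of the self-ambiguity part satisfies
`Var(χ_s(τ,ν)) = L·(μ₄ − 1)·|ψ(τ,ν)|²`. -/
theorem variance_self_ambiguity
    {Ω : Type*} [MeasureSpace Ω] [IsProbabilityMeasure (ℙ : Measure Ω)]
    (L : ℕ) (hL : 1 ≤ L) (T : ℝ) (hT : 0 < T) (τ ν : ℝ)
    (ψ : ℝ × ℝ → ℂ) (s : Fin L → Ω → ℂ) (μ₄ : ℝ) (hμ₄ : 1 ≤ μ₄)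
    (hmeas : ∀ n : Fin L, Measurable (s n))
    (hindep : iIndepFun s ℙ)
    (hE2 : ∀ n : Fin L, ∫ ω, (‖s n ω‖) ^ 2 ∂ℙ = 1)
    (hmom4 : ∀ n : Fin L, Integrable (fun ω => (‖s n ω‖) ^ 4) ℙ)
    (hE4 : ∀ n : Fin L, ∫ ω, (‖s n ω‖) ^ 4 ∂ℙ = μ₄) :
    cVar (chiS L ψ T τ ν s) = L * (μ₄ - 1) * (‖ψ (τ, ν)‖) ^ 2 :=
  variance_self_ambiguity_general L T τ ν ψ s μ₄ hmeas hindep hE2 hmom4 hE4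
end

section
/- Under the stated assumptions, the expected integrated sidelobe level over the region of interest equals the integrated weighted squared pulse ambiguity: E[∬_Θ |χ(τ, ν)|² dτ dν] = Σ_{|n| < L} ∬_Θ α_n(ν) · |ψ(τ + nT, ν)|² dτ dν, where α_0(ν) = L(μ₄ − 1) + |Σ_{m=0}^{L−1} exp(−2πi·m·ν·T)|² and α_n(ν) = L − |n| for 0 < |n| < L. -/
/-!
Exchanging expectation and integration over `Θ` (Fubini) reduces the claim to a pointwise
identity for `E|χ(τ,ν)|²`. Since `χ = Σ_{n,m} ψ_{n,m} s_n s̄_m`, this is a Hermitian form in the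
`ψ_{n,m}` whose coefficients are the fourth moments `E[s_n s̄_m s̄_{n'} s_{m'}]`. By independence
such a moment vanishes as soon as one index occurs only once (the symbols are centred), and the
pairing `n = m', m = n'` contributes `E[s_n²] E[s̄_m²] = 0`, so it equals
`[n = m][n' = m'] + [n = n'][m = m'] + (μ₄ - 2)[n = m = n' = m']`. Summing gives
`|Σ_n e^{-2πinνT}|² |ψ(τ,ν)|² + Σ_{n,m} |ψ(τ + (m-n)T, ν)|² + (μ₄ - 2) L |ψ(τ,ν)|²`, and the lag
`k = m - n` is attained by `L - |k|` pairs. The weights `α_k` are nonnegative, which makes every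
term of the resulting sum integrable over `Θ`.
-/

open MeasureTheory ProbabilityTheory Complex

/-- The ambiguity function of the frame signal:
`χ(τ,ν) = Σ_n Σ_m s_n conj(s_m) ψ_{n,m}(τ,ν)`. -/
noncomputable def chi {Ω : Type*} (L : ℕ) (ψ : ℝ × ℝ → ℂ) (T τ ν : ℝ)
    (s : Fin L → Ω → ℂ) (ω : Ω) : ℂ :=
  ∑ n : Fin L, ∑ m : Fin L, s n ω * (starRingEnd ℂ) (s m ω) * psiNM ψ T τ ν n m

/-- The weighting coefficients: `α_0(ν) = L(μ₄ − 1) + |Σ_{m<L} exp(−2πi·m·ν·T)|²` and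
`α_n(ν) = L − |n|` for `n ≠ 0`. -/
noncomputable def alphaCoef (L : ℕ) (μ₄ T ν : ℝ) (n : ℤ) : ℝ :=
  if n = 0 then
    L * (μ₄ - 1) +
      ‖∑ m : Fin L, Complex.exp (-2 * Real.pi * Complex.I * (m : ℕ) * ν * T)‖ ^ 2
  else (L : ℝ) - |(n : ℝ)|

open Finset
open scoped ComplexConjugate

lemma card_filter_sub_eq_natCast (L j : ℕ) :
    #{p : Fin L × Fin L | (p.2 : ℤ) - p.1 = j} = L - j := by
  rw [← min_eq_right (Nat.sub_le L j), ← Fin.card_filter_val_lt]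
  refine card_bij (fun p _ ↦ p.1) (fun p hp ↦ ?_) (fun p hp q hq h ↦ ?_) (fun n hn ↦ ?_)
  · simp only [mem_filter, mem_univ, true_and] at hp ⊢
    omega
  · simp only [mem_filter, mem_univ, true_and] at hp hq
    exact Prod.ext h (Fin.ext (by omega))
  · simp only [mem_filter, mem_univ, true_and] at hn
    exact ⟨(n, ⟨n + j, by omega⟩), by simp, rfl⟩

lemma card_filter_sub_eq (L : ℕ) (k : ℤ) :
    #{p : Fin L × Fin L | (p.2 : ℤ) - p.1 = k} = L - k.natAbs := by
  rcases Int.natAbs_eq k with hk | hk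
  · rw [hk, card_filter_sub_eq_natCast, Int.natAbs_natCast]
  · rw [← card_filter_sub_eq_natCast L k.natAbs]
    refine card_equiv (Equiv.prodComm _ _) fun p ↦ ?_
    simp only [mem_filter, mem_univ, true_and, Equiv.prodComm_apply, Prod.fst_swap,
      Prod.snd_swap]
    omega

lemma sum_sub_eq_sum_Ioo {M : Type*} [AddCommMonoid M] (L : ℕ) (F : ℤ → M) :
    ∑ p : Fin L × Fin L, F (p.2 - p.1) = ∑ k ∈ Ioo (-(L : ℤ)) L, (L - k.natAbs) • F k := by
  rw [← sum_fiberwise_of_maps_to' (g := fun p : Fin L × Fin L ↦ (p.2 : ℤ) - p.1)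
    (t := Ioo (-(L : ℤ)) L) (fun p _ ↦ by simp only [mem_Ioo]; omega)]
  simp only [sum_const, card_filter_sub_eq]

lemma mul_mul_mul_le_sum_pow_four (a b c d : ℝ) :
    a * b * c * d ≤ a ^ 4 + b ^ 4 + c ^ 4 + d ^ 4 := by
  nlinarith [sq_nonneg (a ^ 2 - b ^ 2), sq_nonneg (c ^ 2 - d ^ 2), sq_nonneg (a * b - c * d),
    sq_nonneg (a * b + c * d)]

lemma MeasureTheory.Integrable.of_sum_of_nonneg {α ι : Type*} [MeasurableSpace α]
    {μ : Measure α} {t : Finset ι} {f : ι → α → ℝ} (hsum : Integrable (fun x ↦ ∑ i ∈ t, f i x) μ)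
    (hf : ∀ i ∈ t, AEStronglyMeasurable (f i) μ) (hnonneg : ∀ i ∈ t, ∀ x, 0 ≤ f i x) {i : ι}
    (hi : i ∈ t) : Integrable (f i) μ :=
  hsum.mono' (hf i hi) <| ae_of_all _ fun x ↦ by
    rw [Real.norm_of_nonneg (hnonneg i hi x)]
    exact single_le_sum (fun j hj ↦ hnonneg j hj x) hi

lemma exists_forall_eq_imp_eq_of_not_paired {ι : Type*} {n m n' m' : ι}
    (h : ¬((n = m ∧ n' = m') ∨ (n = n' ∧ m = m') ∨ (n = m' ∧ m = n'))) :
    ∃ k₀ : Fin 4, ∀ k, ![n, m, n', m'] k = ![n, m, n', m'] k₀ → k = k₀ := by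
  by_contra! h'
  simp [Fin.forall_fin_succ, Fin.exists_fin_succ] at h'
  grind

section Moments

variable {Ω ι : Type*} [MeasurableSpace Ω] {μ : Measure Ω} {s : ι → Ω → ℂ}

lemma integrable_mul_conj_mul_conj (hmeas : ∀ i, Measurable (s i))
    (hmom4 : ∀ i, Integrable (fun ω ↦ ‖s i ω‖ ^ 4) μ) (p q : ι × ι) :
    Integrable (fun ω ↦ s p.1 ω * conj (s p.2 ω) * conj (s q.1 ω * conj (s q.2 ω))) μ := by
  refine Integrable.mono' ((((hmom4 p.1).add (hmom4 p.2)).add (hmom4 q.1)).add (hmom4 q.2))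
    (by fun_prop) (ae_of_all _ fun ω ↦ ?_)
  simpa [mul_assoc] using mul_mul_mul_le_sum_pow_four ‖s p.1 ω‖ ‖s p.2 ω‖ ‖s q.1 ω‖ ‖s q.2 ω‖

lemma ofReal_integral_norm_sum_sq {κ : Type*} [Fintype κ] (a : κ → ℂ) {X : κ → Ω → ℂ}
    (hX : ∀ p q, Integrable (fun ω ↦ X p ω * conj (X q ω)) μ) :
    ((∫ ω, ‖∑ p, a p * X p ω‖ ^ 2 ∂μ : ℝ) : ℂ)
      = ∑ p, ∑ q, a p * conj (a q) * ∫ ω, X p ω * conj (X q ω) ∂μ := by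
  have hexpand (ω : Ω) : ((‖∑ p, a p * X p ω‖ ^ 2 : ℝ) : ℂ)
      = ∑ p, ∑ q, a p * conj (a q) * (X p ω * conj (X q ω)) := by
    rw [Complex.ofReal_pow, ← Complex.mul_conj', map_sum, sum_mul_sum]
    refine sum_congr rfl fun p _ ↦ sum_congr rfl fun q _ ↦ ?_
    simp only [map_mul]; ring
  rw [← integral_complex_ofReal]
  simp_rw [hexpand]
  rw [integral_finsetSum _ fun p _ ↦ integrable_finsetSum _ fun q _ ↦ (hX p q).const_mul _]
  refine sum_congr rfl fun p _ ↦ ?_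
  rw [integral_finsetSum _ fun q _ ↦ (hX p q).const_mul _]
  simp_rw [integral_const_mul]

lemma ProbabilityTheory.iIndepFun.integral_prod_comp_eq_zero_of_unique [Fintype ι]
    {κ : Type*} [Fintype κ] (hs : iIndepFun s μ) (hmeas : ∀ i, Measurable (s i))
    {idx : κ → ι} {f : κ → ℂ → ℂ} (hf : ∀ k, Measurable (f k)) {k₀ : κ}
    (hk₀ : ∀ k, idx k = idx k₀ → k = k₀) (h0 : ∫ ω, f k₀ (s (idx k₀) ω) ∂μ = 0) :
    ∫ ω, ∏ k, f k (s (idx k) ω) ∂μ = 0 := by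
  classical
  have hgroup (ω : Ω) : ∏ k, f k (s (idx k) ω) = ∏ i, ∏ k with idx k = i, f k (s i ω) := by
    rw [← prod_fiberwise univ idx]
    exact prod_congr rfl fun i _ ↦ prod_congr rfl fun k hk ↦ by rw [(mem_filter.1 hk).2]
  have hfiber : ({k | idx k = idx k₀} : Finset κ) = {k₀} := by
    ext k
    simpa using ⟨hk₀ k, fun h ↦ h ▸ rfl⟩
  simp_rw [hgroup]
  rw [hs.integral_fun_prod_comp (fun i ↦ (hmeas i).aemeasurable)
    fun i ↦ (Finset.measurable_prod _ fun k _ ↦ hf k).aestronglyMeasurable]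
  exact prod_eq_zero (mem_univ (idx k₀)) (by simpa [hfiber] using h0)

lemma integral_mul_conj_eq_one {X : Ω → ℂ} (h : ∫ ω, ‖X ω‖ ^ 2 ∂μ = 1) :
    ∫ ω, X ω * conj (X ω) ∂μ = 1 := by
  simp_rw [Complex.mul_conj', ← Complex.ofReal_pow, integral_complex_ofReal, h,
    Complex.ofReal_one]

lemma integral_mul_conj_sq {X : Ω → ℂ} {μ₄ : ℝ} (h : ∫ ω, ‖X ω‖ ^ 4 ∂μ = μ₄) :
    ∫ ω, (X ω * conj (X ω)) ^ 2 ∂μ = μ₄ := by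
  simp_rw [Complex.mul_conj', ← pow_mul, ← Complex.ofReal_pow, integral_complex_ofReal, h]

variable [DecidableEq ι]

lemma integral_mul_conj_mul_mul_conj {μ₄ : ℝ} (hs : iIndepFun s μ)
    (hmeas : ∀ i, Measurable (s i)) (hE2 : ∀ i, ∫ ω, ‖s i ω‖ ^ 2 ∂μ = 1)
    (hE4 : ∀ i, ∫ ω, ‖s i ω‖ ^ 4 ∂μ = μ₄) (i j : ι) :
    ∫ ω, s i ω * conj (s i ω) * (s j ω * conj (s j ω)) ∂μ = if i = j then (μ₄ : ℂ) else 1 := by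
  split_ifs with hij
  · subst hij
    simpa only [sq] using integral_mul_conj_sq (hE4 i)
  · rw [(hs.indepFun hij).integral_fun_comp_mul_comp (f := fun z ↦ z * conj z)
      (g := fun z ↦ z * conj z) (hmeas i).aemeasurable (hmeas j).aemeasurable
      (by fun_prop) (by fun_prop), integral_mul_conj_eq_one (hE2 i),
      integral_mul_conj_eq_one (hE2 j), one_mul]

lemma integral_sq_mul_conj_sq {μ₄ : ℝ} (hs : iIndepFun s μ)
    (hmeas : ∀ i, Measurable (s i)) (hpseudo : ∀ i, ∫ ω, s i ω ^ 2 ∂μ = 0)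
    (hE4 : ∀ i, ∫ ω, ‖s i ω‖ ^ 4 ∂μ = μ₄) (i j : ι) :
    ∫ ω, s i ω ^ 2 * conj (s j ω) ^ 2 ∂μ = if i = j then (μ₄ : ℂ) else 0 := by
  split_ifs with hij
  · subst hij
    simpa only [mul_pow] using integral_mul_conj_sq (hE4 i)
  · rw [(hs.indepFun hij).integral_fun_comp_mul_comp (f := fun z ↦ z ^ 2)
      (g := fun z ↦ conj z ^ 2) (hmeas i).aemeasurable (hmeas j).aemeasurable
      (by fun_prop) (by fun_prop), hpseudo i, zero_mul]

lemma integral_mul_conj_mul_conj [Fintype ι] {μ₄ : ℝ} (hs : iIndepFun s μ)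
    (hmeas : ∀ i, Measurable (s i)) (hmean : ∀ i, ∫ ω, s i ω ∂μ = 0)
    (hpseudo : ∀ i, ∫ ω, s i ω ^ 2 ∂μ = 0) (hE2 : ∀ i, ∫ ω, ‖s i ω‖ ^ 2 ∂μ = 1)
    (hE4 : ∀ i, ∫ ω, ‖s i ω‖ ^ 4 ∂μ = μ₄) (p q : ι × ι) :
    ∫ ω, s p.1 ω * conj (s p.2 ω) * conj (s q.1 ω * conj (s q.2 ω)) ∂μ
      = (if p.1 = p.2 ∧ q.1 = q.2 then 1 else 0) + (if p = q then 1 else 0)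
        + (if p.1 = p.2 ∧ p = q then (μ₄ : ℂ) - 2 else 0) := by
  obtain ⟨n, m⟩ := p
  obtain ⟨n', m'⟩ := q
  simp only [Prod.mk.injEq, map_mul, Complex.conj_conj]
  by_cases hpair : (n = m ∧ n' = m') ∨ (n = n' ∧ m = m') ∨ (n = m' ∧ m = n')
  · rcases hpair with ⟨rfl, rfl⟩ | ⟨rfl, rfl⟩ | ⟨rfl, rfl⟩
    · convert integral_mul_conj_mul_mul_conj hs hmeas hE2 hE4 n n' using 1
      · simp only [mul_comm (conj _) (s n' _)]
      · simp only [and_self, true_and]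
        split_ifs <;> ring
    · convert integral_mul_conj_mul_mul_conj hs hmeas hE2 hE4 n m using 1
      · congr 1; ext; ring
      · simp only [and_self, and_true]
        split_ifs <;> ring
    · convert integral_sq_mul_conj_sq hs hmeas hpseudo hE4 n m using 1
      · congr 1; ext; ring
      · simp only [eq_comm (a := m), and_self]
        split_ifs <;> ring
  · rw [if_neg fun h ↦ hpair (.inl h), if_neg fun h ↦ hpair (.inr (.inl h)),
      if_neg fun h ↦ hpair (.inr (.inl h.2)), add_zero, add_zero]
    obtain ⟨k₀, hk₀⟩ := exists_forall_eq_imp_eq_of_not_paired hpair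
    have hcentered : ∀ k, ∫ ω, ![id, conj, conj, id] k (s (![n, m, n', m'] k) ω) ∂μ = 0 := by
      intro k
      fin_cases k <;> simp [integral_conj, hmean]
    convert (hs.integral_prod_comp_eq_zero_of_unique hmeas (f := ![id, conj, conj, id])
      (fun k ↦ by
        fin_cases k
        exacts [measurable_id, Complex.continuous_conj.measurable,
          Complex.continuous_conj.measurable, measurable_id]) hk₀ (hcentered k₀)) using 3
    simp [Fin.prod_univ_four, mul_assoc]

end Moments

lemma sum_sum_mul_conj_mul_quartic {ι : Type*} [Fintype ι] [DecidableEq ι] (a : ι × ι → ℂ)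
    (μ₄ : ℝ) :
    ∑ p, ∑ q, a p * conj (a q) * ((if p.1 = p.2 ∧ q.1 = q.2 then 1 else 0)
        + (if p = q then 1 else 0) + (if p.1 = p.2 ∧ p = q then (μ₄ : ℂ) - 2 else 0))
      = ((‖∑ i, a (i, i)‖ ^ 2 + ∑ p, ‖a p‖ ^ 2 + (μ₄ - 2) * ∑ i, ‖a (i, i)‖ ^ 2 : ℝ) : ℂ) := by
  push_cast
  simp only [← Complex.mul_conj', map_sum, sum_mul_sum, mul_add, sum_add_distrib, mul_ite,
    mul_one, mul_zero, ite_and, Fintype.sum_prod_type, Prod.mk.injEq]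
  simp [sum_ite_irrel, mul_sum, mul_comm]

lemma norm_psiNM (ψ : ℝ × ℝ → ℂ) (T τ ν : ℝ) (n m : ℕ) :
    ‖psiNM ψ T τ ν n m‖ = ‖ψ (τ + ((m : ℤ) - n : ℤ) * T, ν)‖ := by
  simp [psiNM, Complex.norm_exp]

lemma sum_psiNM_self (ψ : ℝ × ℝ → ℂ) (T τ ν : ℝ) (L : ℕ) :
    ∑ n : Fin L, psiNM ψ T τ ν n n
      = (∑ n : Fin L, Complex.exp (-2 * Real.pi * Complex.I * (n : ℕ) * ν * T)) * ψ (τ, ν) := by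
  simp [psiNM, sum_mul]

lemma chi_eq_sum {Ω : Type*} (L : ℕ) (ψ : ℝ × ℝ → ℂ) (T τ ν : ℝ) (s : Fin L → Ω → ℂ) (ω : Ω) :
    chi L ψ T τ ν s ω = ∑ p : Fin L × Fin L, psiNM ψ T τ ν p.1 p.2 * (s p.1 ω * conj (s p.2 ω)) := by
  rw [chi, Fintype.sum_prod_type]
  simp only [mul_comm]

lemma alphaCoef_eq (L : ℕ) (μ₄ T ν : ℝ) (k : ℤ) :
    alphaCoef L μ₄ T ν k = L - |(k : ℝ)| + if k = 0 then
      L * (μ₄ - 2) + ‖∑ m : Fin L, Complex.exp (-2 * Real.pi * Complex.I * (m : ℕ) * ν * T)‖ ^ 2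
      else 0 := by
  unfold alphaCoef
  split_ifs with hk
  · rw [hk, Int.cast_zero, abs_zero]
    ring
  · rw [add_zero]

lemma alphaCoef_nonneg {L : ℕ} {μ₄ : ℝ} (hμ₄ : 1 ≤ μ₄) (T ν : ℝ) {k : ℤ}
    (hk : k ∈ Ioo (-(L : ℤ)) L) : 0 ≤ alphaCoef L μ₄ T ν k := by
  rw [mem_Ioo] at hk
  unfold alphaCoef
  split_ifs
  · have : (0 : ℝ) ≤ L * (μ₄ - 1) := mul_nonneg (Nat.cast_nonneg L) (by linarith)
    positivity
  · rw [sub_nonneg, abs_le]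
    constructor <;> exact_mod_cast (by omega)

lemma measurable_alphaCoef (L : ℕ) (μ₄ T : ℝ) (k : ℤ) :
    Measurable fun ν ↦ alphaCoef L μ₄ T ν k := by
  unfold alphaCoef
  split_ifs <;> fun_prop

theorem integral_norm_chi_sq {Ω : Type*} [MeasurableSpace Ω] {μ : Measure Ω} {L : ℕ}
    (hL : 1 ≤ L) (T : ℝ) (ψ : ℝ × ℝ → ℂ) {s : Fin L → Ω → ℂ} {μ₄ : ℝ} (hs : iIndepFun s μ)
    (hmeas : ∀ n, Measurable (s n)) (hmean : ∀ n, ∫ ω, s n ω ∂μ = 0)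
    (hpseudo : ∀ n, ∫ ω, s n ω ^ 2 ∂μ = 0) (hE2 : ∀ n, ∫ ω, ‖s n ω‖ ^ 2 ∂μ = 1)
    (hmom4 : ∀ n, Integrable (fun ω ↦ ‖s n ω‖ ^ 4) μ) (hE4 : ∀ n, ∫ ω, ‖s n ω‖ ^ 4 ∂μ = μ₄)
    (τ ν : ℝ) :
    ∫ ω, ‖chi L ψ T τ ν s ω‖ ^ 2 ∂μ
      = ∑ k ∈ Ioo (-(L : ℤ)) L, alphaCoef L μ₄ T ν k * ‖ψ (τ + k * T, ν)‖ ^ 2 := by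
  set a : Fin L × Fin L → ℂ := fun p ↦ psiNM ψ T τ ν p.1 p.2
  have hsecond : ∫ ω, ‖chi L ψ T τ ν s ω‖ ^ 2 ∂μ
      = ‖∑ n, a (n, n)‖ ^ 2 + ∑ p, ‖a p‖ ^ 2 + (μ₄ - 2) * ∑ n, ‖a (n, n)‖ ^ 2 := by
    have h := ofReal_integral_norm_sum_sq a (integrable_mul_conj_mul_conj hmeas hmom4)
    simp_rw [integral_mul_conj_mul_conj hs hmeas hmean hpseudo hE2 hE4,
      sum_sum_mul_conj_mul_quartic] at h
    simp_rw [chi_eq_sum]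
    exact_mod_cast h
  set F : ℤ → ℝ := fun k ↦ ‖ψ (τ + k * T, ν)‖ ^ 2
  have hoff : ∑ p, ‖a p‖ ^ 2 = ∑ k ∈ Ioo (-(L : ℤ)) L, ((L : ℝ) - |(k : ℝ)|) * F k := by
    simp only [a, norm_psiNM]
    rw [sum_sub_eq_sum_Ioo L F]
    refine sum_congr rfl fun k hk ↦ ?_
    rw [mem_Ioo] at hk
    rw [nsmul_eq_mul, Nat.cast_sub (by omega), Nat.cast_natAbs, Int.cast_abs]
  have hdiag : ∑ n, ‖a (n, n)‖ ^ 2 = L * F 0 := by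
    simp [a, norm_psiNM, F]
  have h0 : (0 : ℤ) ∈ Ioo (-(L : ℤ)) L := by
    rw [mem_Ioo]; omega
  rw [hsecond, hoff, hdiag, sum_psiNM_self, norm_mul, mul_pow]
  simp only [alphaCoef_eq, add_mul, sum_add_distrib, ite_mul, zero_mul, sum_ite_eq', if_pos h0]
  simp only [F, Int.cast_zero, zero_mul, add_zero]
  ring

theorem expected_ISL_closed_form_general
    {Ω : Type*} [MeasureSpace Ω] [IsProbabilityMeasure (ℙ : Measure Ω)]
    (L : ℕ) (hL : 1 ≤ L) (T : ℝ)
    (ψ : ℝ × ℝ → ℂ) (hψ : Measurable ψ)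
    (s : Fin L → Ω → ℂ) (μ₄ : ℝ) (hμ₄ : 1 ≤ μ₄)
    (Θ : Set (ℝ × ℝ))
    (hint : Integrable
      (fun q : (ℝ × ℝ) × Ω => ‖chi L ψ T q.1.1 q.1.2 s q.2‖ ^ 2)
      (((volume : Measure (ℝ × ℝ)).restrict Θ).prod ℙ))
    (hmeas : ∀ n : Fin L, Measurable (s n))
    (hindep : iIndepFun s ℙ)
    (hmean : ∀ n : Fin L, ∫ ω, s n ω ∂ℙ = 0)
    (hpseudo : ∀ n : Fin L, ∫ ω, (s n ω) ^ 2 ∂ℙ = 0)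
    (hE2 : ∀ n : Fin L, ∫ ω, ‖s n ω‖ ^ 2 ∂ℙ = 1)
    (hmom4 : ∀ n : Fin L, Integrable (fun ω => ‖s n ω‖ ^ 4) ℙ)
    (hE4 : ∀ n : Fin L, ∫ ω, ‖s n ω‖ ^ 4 ∂ℙ = μ₄) :
    (∫ ω, (∫ p in Θ, ‖chi L ψ T p.1 p.2 s ω‖ ^ 2) ∂ℙ)
      = ∑ n ∈ Finset.Ioo (-(L : ℤ)) (L : ℤ),
          ∫ p in Θ, alphaCoef L μ₄ T p.2 n * ‖ψ (p.1 + n * T, p.2)‖ ^ 2 := by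
  have hpoint (p : ℝ × ℝ) := integral_norm_chi_sq hL T ψ hindep hmeas hmean hpseudo hE2 hmom4 hE4
    p.1 p.2
  have hsum : Integrable (fun p : ℝ × ℝ ↦ ∑ k ∈ Ioo (-(L : ℤ)) L,
      alphaCoef L μ₄ T p.2 k * ‖ψ (p.1 + k * T, p.2)‖ ^ 2) (volume.restrict Θ) := by
    simpa only [hpoint] using hint.integral_prod_left
  rw [← integral_integral_swap hint]
  simp_rw [hpoint]
  refine integral_finsetSum _ fun k hk ↦ hsum.of_sum_of_nonneg (fun j _ ↦ ?_) (fun j hj p ↦ ?_) hk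
  · exact ((measurable_alphaCoef L μ₄ T j).comp measurable_snd).mul (by fun_prop)
      |>.aestronglyMeasurable
  · exact mul_nonneg (alphaCoef_nonneg hμ₄ T p.2 hj) (sq_nonneg _)

/-- The expected integrated sidelobe level over the delay–Doppler region of interest `Θ`
equals the integrated weighted squared pulse ambiguity:
`E[∬_Θ |χ(τ,ν)|² dτ dν] = Σ_{|n|<L} ∬_Θ α_n(ν)·|ψ(τ + nT, ν)|² dτ dν`. -/
theorem expected_ISL_closed_form
    {Ω : Type*} [MeasureSpace Ω] [IsProbabilityMeasure (ℙ : Measure Ω)]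
    (L : ℕ) (hL : 1 ≤ L) (T : ℝ) (hT : 0 < T)
    (ψ : ℝ × ℝ → ℂ) (hψ : Measurable ψ)
    (s : Fin L → Ω → ℂ) (μ₄ : ℝ) (hμ₄ : 1 ≤ μ₄)
    (Θ : Set (ℝ × ℝ)) (hΘ : MeasurableSet Θ)
    (hint : Integrable
      (fun q : (ℝ × ℝ) × Ω => ‖chi L ψ T q.1.1 q.1.2 s q.2‖ ^ 2)
      (((volume : Measure (ℝ × ℝ)).restrict Θ).prod ℙ))
    (hmeas : ∀ n : Fin L, Measurable (s n))
    (hindep : iIndepFun s ℙ)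
    (hmean : ∀ n : Fin L, ∫ ω, s n ω ∂ℙ = 0)
    (hpseudo : ∀ n : Fin L, ∫ ω, (s n ω) ^ 2 ∂ℙ = 0)
    (hE2 : ∀ n : Fin L, ∫ ω, ‖s n ω‖ ^ 2 ∂ℙ = 1)
    (hmom4 : ∀ n : Fin L, Integrable (fun ω => ‖s n ω‖ ^ 4) ℙ)
    (hE4 : ∀ n : Fin L, ∫ ω, ‖s n ω‖ ^ 4 ∂ℙ = μ₄) :
    (∫ ω, (∫ p in Θ, ‖chi L ψ T p.1 p.2 s ω‖ ^ 2) ∂ℙ)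
      = ∑ n ∈ Finset.Ioo (-(L : ℤ)) (L : ℤ),
          ∫ p in Θ, alphaCoef L μ₄ T p.2 n * ‖ψ (p.1 + n * T, p.2)‖ ^ 2 :=
  expected_ISL_closed_form_general L hL T ψ hψ s μ₄ hμ₄ Θ hint hmeas hindep hmean hpseudo hE2 hmom4
    hE4
end
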